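/- (Lemma 2, Riemann approximation.) Let f:ℝ→ℝ be continuously differentiable with f and f' bounded, and set A_n = (2^{j/2}/n)Σ_{i=1}^n 1_{jk}(i/n) f(X_{i/n}) − 2^{j/2}∫₀¹ 1_{jk}(s) f(X_s) ds. Then there is a constant c, depending only on f and σ (not on n, j, k), such that E[A_n²] ≤ c·2^{-j}·n^{-1} for all n, all j ≥ 0 with n2^{-j} ∈ ℕ, and all 0 ≤ k ≤ 2^j − 1. -/

import Mathlib

open MeasureTheory ProbabilityTheory Real Filter
open scoped ENNReal NNReal

noncomputable section

namespace RoundOff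

/-- `W` is a standard Brownian motion on `(Ω, 𝔉, ℙ)`: it starts at `0`, has continuous
paths, Gaussian increments `W t - W s ∼ N(0, t - s)` and independent increments. -/
def IsStdBM {Ω : Type*} [MeasureSpace Ω] (W : ℝ → Ω → ℝ) : Prop :=
  (∀ t, Measurable (W t)) ∧
  (∀ ω, W 0 ω = 0) ∧
  (∀ ω, Continuous fun t => W t ω) ∧
  (∀ s t : ℝ, 0 ≤ s → s ≤ t →
    Measure.map (fun ω => W t ω - W s ω) ℙ = gaussianReal 0 (Real.toNNReal (t - s))) ∧
  ∀ (n : ℕ) (t : Fin (n + 1) → ℝ), Monotone t → (∀ i, 0 ≤ t i) →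
    iIndepFun
      (fun i : Fin n => fun ω => W (t i.succ) ω - W (t i.castSucc) ω) ℙ

/-- Assumption A: `α` is positive, decreasing to `0` and `sup_n α_n (log n)² < ∞`. -/
def AssumptionA (α : ℕ → ℝ) : Prop :=
  (∀ n, 0 < α n) ∧ Antitone α ∧ Tendsto α atTop (nhds 0) ∧
  ∃ C, ∀ n : ℕ, α n * Real.log n ^ 2 ≤ C

/-- Assumption A1 (with exponent `ρ`): `α` is positive, decreasing to `0` and
`sup_n α_n^{1-ρ} (log n)² < ∞`. -/
def AssumptionA1 (α : ℕ → ℝ) (ρ : ℝ) : Prop :=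
  (∀ n, 0 < α n) ∧ Antitone α ∧ Tendsto α atTop (nhds 0) ∧ 0 < ρ ∧
  ∃ C, ∀ n : ℕ, α n ^ (1 - ρ) * Real.log n ^ 2 ≤ C

/-- Assumption B': `σ` is C² with `σ, σ', σ''` bounded and `σ ≥ c₀ > 0`. -/
def AssumptionBp (σ : ℝ → ℝ) : Prop :=
  ContDiff ℝ 2 σ ∧
  (∃ C, ∀ x, |σ x| ≤ C ∧ |deriv σ x| ≤ C ∧ |deriv (deriv σ) x| ≤ C) ∧
  ∃ c₀ > 0, ∀ x, c₀ ≤ σ x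

/-- Assumption C': `g` is C² with `g, g', g''` bounded and `g ≥ c₁ > 0`. -/
def AssumptionCp (g : ℝ → ℝ) : Prop :=
  ContDiff ℝ 2 g ∧
  (∃ C, ∀ x, |g x| ≤ C ∧ |deriv g x| ≤ C ∧ |deriv (deriv g) x| ≤ C) ∧
  ∃ c₁ > 0, ∀ x, c₁ ≤ g x

/-- Assumption C1': C' together with: `g'` of constant sign and `|g'|^{1/2}` C² with
bounded derivatives. -/
def AssumptionC1p (g : ℝ → ℝ) : Prop :=
  AssumptionCp g ∧
  ((∀ x, 0 ≤ deriv g x) ∨ (∀ x, deriv g x ≤ 0)) ∧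
  ContDiff ℝ 2 (fun x => Real.sqrt |deriv g x|) ∧
  ∃ C, ∀ x, |deriv (fun x => Real.sqrt |deriv g x|) x| ≤ C ∧
            |deriv (deriv (fun x => Real.sqrt |deriv g x|)) x| ≤ C

/-- Assumption D (via the representation `X = h ∘ W`): `h` solves `h' = σ ∘ h`, `h 0 = x₀`,
i.e. `h = S⁻¹(· + S x₀)` with `S(x) = ∫₀ˣ dy/σ(y)`. -/
def IsScaleFun (σ : ℝ → ℝ) (x₀ : ℝ) (h : ℝ → ℝ) : Prop :=
  h 0 = x₀ ∧ ∀ x, HasDerivAt h (σ (h x)) x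

def beta (α : ℕ → ℝ) (n : ℕ) : ℝ := α n * Real.sqrt n

/-- `r_n = max (α_n, n^{-1/2})`. -/
def rr (α : ℕ → ℝ) (n : ℕ) : ℝ := max (α n) (1 / Real.sqrt n)

/-- Round-off of `x` at level `a`: `a ⌊x / a⌋`. -/
def rnd (a x : ℝ) : ℝ := a * (⌊x / a⌋ : ℤ)

/-- `1_{jk}`: indicator of `(k 2^{-j}, (k+1) 2^{-j}]`. -/
def ind (j k : ℕ) (s : ℝ) : ℝ :=
  Set.indicator (Set.Ioc ((k : ℝ) / 2 ^ j) (((k : ℝ) + 1) / 2 ^ j)) 1 s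

/-- The Haar-type wavelet: `-1` on `[0,1/2]`, `+1` on `(1/2,1]`, `0` elsewhere. -/
def psi (s : ℝ) : ℝ :=
  Set.indicator (Set.Ioc (1 / 2 : ℝ) 1) 1 s - Set.indicator (Set.Icc (0 : ℝ) (1 / 2)) 1 s

def psijk (j k : ℕ) (s : ℝ) : ℝ := (2 : ℝ) ^ ((j : ℝ) / 2) * psi (2 ^ j * s - (k : ℝ))

/-- `G(u) = ∫₀ᵘ ψ` -/
def Gpsi (u : ℝ) : ℝ := ∫ v in (0 : ℝ)..u, psi v

/-- `c(ψ) = ∫₀¹ G(u)² du` -/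
def cpsi : ℝ := ∫ u in (0 : ℝ)..1, Gpsi u ^ 2

variable {Ω : Type*} [MeasureSpace Ω]

/-- The diffusion `X_t = h(W_t)`. -/
def X (W : ℝ → Ω → ℝ) (h : ℝ → ℝ) (t : ℝ) (ω : Ω) : ℝ := h (W t ω)

/-- The rounded observation `X^{(α_n)}_{i/n}`. -/
def Xr (W : ℝ → Ω → ℝ) (h : ℝ → ℝ) (α : ℕ → ℝ) (n i : ℕ) (ω : Ω) : ℝ :=
  rnd (α n) (h (W ((i : ℝ) / n) ω))

/-- `θ = ∫₀¹ g(X_s)² σ(X_s)² ds`. -/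
def theta (W : ℝ → Ω → ℝ) (h σ g : ℝ → ℝ) (ω : Ω) : ℝ :=
  ∫ s in (0 : ℝ)..1, g (h (W s ω)) ^ 2 * σ (h (W s ω)) ^ 2

/-- `ĉ_{jk}`. -/
def chat (W : ℝ → Ω → ℝ) (h : ℝ → ℝ) (α : ℕ → ℝ) (g : ℝ → ℝ) (n j k : ℕ) (ω : Ω) : ℝ :=
  Real.sqrt (π / 2) * (2 : ℝ) ^ ((j : ℝ) / 2) / Real.sqrt n *
    ∑ i ∈ Finset.Icc 1 n, ind j k ((i : ℝ) / n) * g (Xr W h α n (i - 1) ω) *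
      |Xr W h α n i ω - Xr W h α n (i - 1) ω|

/-- `d̂_{jk}`. -/
def dhat (W : ℝ → Ω → ℝ) (h : ℝ → ℝ) (α : ℕ → ℝ) (g : ℝ → ℝ) (n j k : ℕ) (ω : Ω) : ℝ :=
  Real.sqrt (π / 2) / Real.sqrt n *
    ∑ i ∈ Finset.Icc 1 n, psijk j k ((i : ℝ) / n) * g (Xr W h α n (i - 1) ω) *
      |Xr W h α n i ω - Xr W h α n (i - 1) ω|

/-- `Q̂_j = Σ_k d̂_{jk}²`. -/
def Qhat (W : ℝ → Ω → ℝ) (h : ℝ → ℝ) (α : ℕ → ℝ) (g : ℝ → ℝ) (n j : ℕ) (ω : Ω) : ℝ :=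
  ∑ k ∈ Finset.range (2 ^ j), dhat W h α g n j k ω ^ 2

/-- `ê_{jk}`. -/
def ehat (W : ℝ → Ω → ℝ) (h : ℝ → ℝ) (α : ℕ → ℝ) (g : ℝ → ℝ) (n j k : ℕ) (ω : Ω) : ℝ :=
  Real.sqrt (π / 2) * (2 : ℝ) ^ ((j : ℝ) / 2) / Real.sqrt n *
    ∑ i ∈ Finset.Icc 1 n, ind j k ((i : ℝ) / n) *
      Real.sqrt |g (Xr W h α n (i - 1) ω) * deriv g (Xr W h α n (i - 1) ω)| *
      |Xr W h α n i ω - Xr W h α n (i - 1) ω|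

/-- `j_{0,n} = ⌊log₂ (min (α_n⁻¹, √n))⌋`. -/
def j0 (α : ℕ → ℝ) (n : ℕ) : ℕ := (⌊Real.logb 2 (min (α n)⁻¹ (Real.sqrt n))⌋).toNat

/-- The first estimator `θ̃_n`. -/
def thetaTilde (W : ℝ → Ω → ℝ) (h : ℝ → ℝ) (α : ℕ → ℝ) (g : ℝ → ℝ) (n : ℕ) (ω : Ω) : ℝ :=
  ∑ k ∈ Finset.range (2 ^ j0 α n), chat W h α g n (j0 α n) k ω ^ 2

/-- `⌊(1+a) log₂ r_n⁻¹⌋`. -/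
def jmax (α : ℕ → ℝ) (a : ℝ) (n : ℕ) : ℕ := (⌊(1 + a) * Real.logb 2 (rr α n)⁻¹⌋).toNat

/-- `R_n(S)`. -/
def Rn (W : ℝ → Ω → ℝ) (h : ℝ → ℝ) (α : ℕ → ℝ) (g : ℝ → ℝ) (j1 j2 : ℕ → ℕ) (a : ℝ)
    (n : ℕ) (ω : Ω) : ℝ :=
  ∑ j ∈ Finset.Icc (j1 n) (jmax α a n), (2 : ℝ) ^ ((j2 n : ℤ) - (j : ℤ)) * Qhat W h α g n (j2 n) ω

open Classical in
/-- `1_{g' ≥ 0} - 1_{g' ≤ 0}`. -/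
def sgnFactor (g : ℝ → ℝ) : ℝ :=
  (if ∀ x, 0 ≤ deriv g x then (1 : ℝ) else 0) - (if ∀ x, deriv g x ≤ 0 then (1 : ℝ) else 0)

/-- Membership of `(a, j1, j2)` in the set `𝒮`. -/
def inS (α : ℕ → ℝ) (a : ℝ) (j1 j2 : ℕ → ℕ) : Prop :=
  0 < a ∧ a < 1 ∧ (∃ C, ∀ n : ℕ, α n ^ (1 - a) * Real.log n ^ 2 ≤ C) ∧
  Tendsto (fun n => rr α n * (2 : ℝ) ^ (2 * (j2 n : ℤ) - (j1 n : ℤ))) atTop (nhds 0) ∧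
  Tendsto (fun n : ℕ =>
    (rr α n)⁻¹ * (2 : ℝ) ^ ((j1 n : ℝ) / 2) * (α n ^ 2 * Real.log n + 1 / n)) atTop (nhds 0) ∧
  Tendsto (fun n => rr α n * (2 : ℝ) ^ (j1 n)) atTop (nhds 0) ∧
  Tendsto (fun n => (rr α n)⁻¹ * (2 : ℝ) ^ (-(3 * (j1 n : ℝ)) / 2)) atTop (nhds 0) ∧
  Tendsto (fun n => (2 : ℝ) ^ ((j2 n : ℤ) - (j1 n : ℤ))) atTop (nhds 0) ∧
  Tendsto (fun n => (rr α n)⁻¹ * (2 : ℝ) ^ (-((j1 n : ℝ) + (j2 n : ℝ) / 2))) atTop (nhds 0)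

/-- The compensated estimator `θ̂_n(S)`. -/
def thetaHat (W : ℝ → Ω → ℝ) (h : ℝ → ℝ) (α : ℕ → ℝ) (g : ℝ → ℝ) (j1 j2 : ℕ → ℕ) (a : ℝ)
    (n : ℕ) (ω : Ω) : ℝ :=
  (∑ k ∈ Finset.range (2 ^ j1 n), chat W h α g n (j1 n) k ω ^ 2) + Rn W h α g j1 j2 a n ω +
    α n * sgnFactor g * ∑ k ∈ Finset.range (2 ^ j0 α n), ehat W h α g n (j0 α n) k ω ^ 2

/-! Kernels and sampling functions -/

/-- `S(x) = ∫₀ˣ dy / σ(y)`. -/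
def Sfun (σ : ℝ → ℝ) (x : ℝ) : ℝ := ∫ y in (0 : ℝ)..x, (σ y)⁻¹

/-- The transition density `p_t(x,y)` of `X`. -/
def pker (σ : ℝ → ℝ) (t x y : ℝ) : ℝ :=
  (σ y)⁻¹ * (Real.sqrt (2 * π * t))⁻¹ * Real.exp (-(Sfun σ y - Sfun σ x) ^ 2 / (2 * t))

/-- `q_t(x,y) = p_t(x, x+y)`. -/
def qker (σ : ℝ → ℝ) (t x y : ℝ) : ℝ := pker σ t x (x + y)

/-- Density of a centered Gaussian with standard deviation `s`. -/
def gaussDensity (s y : ℝ) : ℝ :=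
  (Real.sqrt (2 * π * s ^ 2))⁻¹ * Real.exp (-(y ^ 2) / (2 * s ^ 2))

/-- `mf(x,u) = ∫ h_{σ(x)}(y) f(x,u,y) dy`. -/
def mF (σ : ℝ → ℝ) (f : ℝ → ℝ → ℝ → ℝ) (x u : ℝ) : ℝ := ∫ y, gaussDensity (σ x) y * f x u y

/-- `Mf(x) = ∫₀¹ mf(x,u) du`. -/
def MF (σ : ℝ → ℝ) (f : ℝ → ℝ → ℝ → ℝ) (x : ℝ) : ℝ := ∫ u in (0 : ℝ)..1, mF σ f x u

/-- `m_n f(x,u) = ∫ q_{1/n}(x,y) f(x,u,√n y) dy`. -/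
def mn (σ : ℝ → ℝ) (f : ℝ → ℝ → ℝ → ℝ) (n : ℕ) (x u : ℝ) : ℝ :=
  ∫ y, qker σ (1 / n) x y * f x u (Real.sqrt n * y)

/-- `M_n f(x) = ∫₀¹ m_n f(x,u) du`. -/
def Mnf (σ : ℝ → ℝ) (f : ℝ → ℝ → ℝ → ℝ) (n : ℕ) (x : ℝ) : ℝ :=
  ∫ u in (0 : ℝ)..1, mn σ f n x u

/-- `\bar m_n f(x) = m_n f(x,{x/α_n}) - M_n f(x)`. -/
def mbar (σ : ℝ → ℝ) (α : ℕ → ℝ) (f : ℝ → ℝ → ℝ → ℝ) (n : ℕ) (x : ℝ) : ℝ :=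
  mn σ f n x (Int.fract (x / α n)) - Mnf σ f n x

/-- `l_i^n f(x) = ∫ p_{i/n}(x,y) \bar m_n f(y) dy`. -/
def lin (σ : ℝ → ℝ) (α : ℕ → ℝ) (f : ℝ → ℝ → ℝ → ℝ) (n i : ℕ) (x : ℝ) : ℝ :=
  ∫ y, pker σ ((i : ℝ) / n) x y * mbar σ α f n y

/-- Assumption E with explicit constant `γ`. -/
def AssumptionEWith (bβ : ℕ → ℝ) (γ : ℝ) (f : ℕ → ℝ → ℝ → ℝ → ℝ) : Prop :=
  0 < γ ∧
  (∀ n u y, ContDiff ℝ 2 fun x => f n x u y) ∧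
  ∀ n : ℕ,
    (∀ x u y, |f n x u y| ≤ γ * (1 + bβ n ^ 2) * (1 + |y| ^ γ)) ∧
    (∀ x y, (∫ u in (0 : ℝ)..1, |f n x u y|) ≤ γ * (1 + |y| ^ γ)) ∧
    (∀ i : ℕ, 1 ≤ i → i ≤ 2 → ∀ x u y,
      |iteratedDeriv i (fun x => f n x u y) x| ≤ γ * (1 + bβ n ^ 2) * (1 + |y| ^ γ)) ∧
    (∀ i : ℕ, 1 ≤ i → i ≤ 2 → ∀ x y,
      (∫ u in (0 : ℝ)..1, |iteratedDeriv i (fun x => f n x u y) x|) ≤ γ * (1 + |y| ^ γ))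

/-- Assumption E. -/
def AssumptionE (bβ : ℕ → ℝ) (f : ℕ → ℝ → ℝ → ℝ → ℝ) : Prop :=
  ∃ γ, AssumptionEWith bβ γ f

/-- `V^{jk}(n, f)` for a sampling function `f(x,u,y)`. -/
def Vjk (W : ℝ → Ω → ℝ) (h : ℝ → ℝ) (α : ℕ → ℝ) (f : ℝ → ℝ → ℝ → ℝ) (n j k : ℕ)
    (ω : Ω) : ℝ :=
  (2 : ℝ) ^ ((j : ℝ) / 2) / n * ∑ i ∈ Finset.Icc 1 n, ind j k ((i : ℝ) / n) *
    f (h (W (((i : ℝ) - 1) / n) ω)) (Int.fract (h (W (((i : ℝ) - 1) / n) ω) / α n))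
      (Real.sqrt n * (h (W ((i : ℝ) / n) ω) - h (W (((i : ℝ) - 1) / n) ω)))

/-- `V^{jk}(n, G)` for a function `G` of `x` alone. -/
def VjkX (W : ℝ → Ω → ℝ) (h : ℝ → ℝ) (G : ℝ → ℝ) (n j k : ℕ) (ω : Ω) : ℝ :=
  (2 : ℝ) ^ ((j : ℝ) / 2) / n * ∑ i ∈ Finset.Icc 1 n, ind j k ((i : ℝ) / n) *
    G (h (W (((i : ℝ) - 1) / n) ω))

/-- The natural filtration of `W` at time `t`. -/
def filt (W : ℝ → Ω → ℝ) (t : ℝ) : MeasurableSpace Ω :=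
  ⨆ s ∈ Set.Icc (0 : ℝ) t, MeasurableSpace.comap (W s) inferInstance

/-- `f_i^n`. -/
def fF (W : ℝ → Ω → ℝ) (h : ℝ → ℝ) (α : ℕ → ℝ) (f : ℝ → ℝ → ℝ → ℝ) (n i : ℕ) (ω : Ω) : ℝ :=
  f (h (W (((i : ℝ) - 1) / n) ω)) (Int.fract (h (W (((i : ℝ) - 1) / n) ω) / α n))
    (Real.sqrt n * (h (W ((i : ℝ) / n) ω) - h (W (((i : ℝ) - 1) / n) ω)))

/-- `η_i^n = f_i^n - M_n f_n(X_{(i-1)/n})`. -/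
def eta (W : ℝ → Ω → ℝ) (h σ : ℝ → ℝ) (α : ℕ → ℝ) (f : ℝ → ℝ → ℝ → ℝ) (n i : ℕ)
    (ω : Ω) : ℝ :=
  fF W h α f n i ω - Mnf σ f n (h (W (((i : ℝ) - 1) / n) ω))

/-- `δ_i^n(f, l)`. -/
def delta (W : ℝ → Ω → ℝ) (h σ : ℝ → ℝ) (α : ℕ → ℝ) (f : ℝ → ℝ → ℝ → ℝ) (n l i : ℕ)
    (ω : Ω) : ℝ :=
  ∑ z ∈ Finset.Icc i (min n (i + l - 1)),
    (MeasureTheory.condExp (filt W ((i : ℝ) / n)) ℙ (eta W h σ α f n z) ω -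
     MeasureTheory.condExp (filt W (((i : ℝ) - 1) / n)) ℙ (eta W h σ α f n z) ω)

/-- `𝓜_{jk}^n(f, l)`. -/
def Mjk (W : ℝ → Ω → ℝ) (h σ : ℝ → ℝ) (α : ℕ → ℝ) (f : ℝ → ℝ → ℝ → ℝ) (n l j k : ℕ)
    (ω : Ω) : ℝ :=
  (2 : ℝ) ^ ((j : ℝ) / 2) / n * ∑ i ∈ Finset.Icc 1 n, ind j k ((i : ℝ) / n) *
    delta W h σ α f n l i ω

/-- `s_{jk} = {2^{-j} n k + 1, …, 2^{-j} n (k+1)}`. -/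
def sjk (n j k : ℕ) : Finset ℕ := Finset.Icc (n / 2 ^ j * k + 1) (n / 2 ^ j * (k + 1))

/-- `H_{jk}^n(f, l)`. -/
def Hjk (W : ℝ → Ω → ℝ) (h σ : ℝ → ℝ) (α : ℕ → ℝ) (f : ℝ → ℝ → ℝ → ℝ) (n l j k : ℕ)
    (ω : Ω) : ℝ :=
  (2 : ℝ) ^ ((j : ℝ) / 2) / n * (∑ i ∈ sjk n j k,
      (mbar σ α f n (h (W ((i : ℝ) / n) ω)) - mbar σ α f n (h (W (((i : ℝ) - 1) / n) ω)))) -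
  (2 : ℝ) ^ ((j : ℝ) / 2) / n * ∑ i ∈ sjk n j k,
      (if 2 ≤ min (n - i) (l - 1) then
        lin σ α f n (min (n - i) (l - 1)) (h (W (((i : ℝ) - 1) / n) ω)) else 0)

/-- `K_{jk}^n(f, l)`. -/
def Kjk (W : ℝ → Ω → ℝ) (h σ : ℝ → ℝ) (α : ℕ → ℝ) (f : ℝ → ℝ → ℝ → ℝ) (n l j k : ℕ)
    (ω : Ω) : ℝ :=
  (2 : ℝ) ^ ((j : ℝ) / 2) / n * ∑ i ∈ sjk n j k, ∑ z ∈ Finset.Icc 1 (min (n - i - 1) (l - 2)),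
    (lin σ α f n z (h (W ((i : ℝ) / n) ω)) - lin σ α f n z (h (W (((i : ℝ) - 1) / n) ω)))

/-- Coefficient `c_{jk}` of `s ↦ g(X_s)σ(X_s)` on the Haar scaling functions. -/
def cjk (W : ℝ → Ω → ℝ) (h σ g : ℝ → ℝ) (j k : ℕ) (ω : Ω) : ℝ :=
  (2 : ℝ) ^ ((j : ℝ) / 2) * ∫ s in (0 : ℝ)..1, ind j k s * (g (h (W s ω)) * σ (h (W s ω)))

/-- Coefficient `d_{jk}` of `s ↦ g(X_s)σ(X_s)` in the Haar basis. -/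
def djk (W : ℝ → Ω → ℝ) (h σ g : ℝ → ℝ) (j k : ℕ) (ω : Ω) : ℝ :=
  ∫ s in (0 : ℝ)..1, psijk j k s * (g (h (W s ω)) * σ (h (W s ω)))

/-- The specific sampling function `f_n(x,u,y) = √(π/2) β_n |⌊u + y/β_n⌋|`. -/
def fSpec (α : ℕ → ℝ) (n : ℕ) (x u y : ℝ) : ℝ :=
  Real.sqrt (π / 2) * beta α n * |(⌊u + y / beta α n⌋ : ℤ)|

/-- `q_i^n = √(π/2) n^{-1/2} |X^{(α_n)}_{i/n} - X^{(α_n)}_{(i-1)/n}|` (case g = 1). -/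
def qin (W : ℝ → Ω → ℝ) (h : ℝ → ℝ) (α : ℕ → ℝ) (n i : ℕ) (ω : Ω) : ℝ :=
  Real.sqrt (π / 2) / Real.sqrt n * |Xr W h α n i ω - Xr W h α n (i - 1) ω|

/-- `z_i^n = q_i^n - ∫_{(i-1)/n}^{i/n} σ(X_s) ds`. -/
def zin (W : ℝ → Ω → ℝ) (h σ : ℝ → ℝ) (α : ℕ → ℝ) (n i : ℕ) (ω : Ω) : ℝ :=
  qin W h α n i ω - ∫ s in (((i : ℝ) - 1) / n)..((i : ℝ) / n), σ (h (W s ω))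

/-! Write `n = 2 ^ j * m`, so that the support of `1_{jk}` is the union of the `m` grid cells
`(p/n, (p+1)/n]` with `k m ≤ p < (k+1) m`. On that block the Riemann sum minus the integral is
the sum of the cell errors `∫_{cell} (φ((p+1)/n) - φ s) ds` with `φ = f ∘ X`. Cauchy–Schwarz, once
over the `m` cells and once inside each cell of length `1/n`, bounds the square of `2^{j/2}` times
this sum by `∑_p ∫_{cell} (φ((p+1)/n) - φ s)² ds`, since `2^j m / n = 1`. As `f ∘ h` is Lipschitz
with constant `sup |f'| · sup |σ|` and `E (W_t - W_s)² = t - s`, each cell contributes at most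
`L² / n²` in expectation, for a total of `m L² / n² = L² 2^{-j} / n`. -/

theorem sq_intervalIntegral_le_mul {g : ℝ → ℝ} {a b : ℝ} (hab : a ≤ b) (hg : Continuous g) :
    (∫ x in a..b, g x) ^ 2 ≤ (b - a) * ∫ x in a..b, g x ^ 2 := by
  rcases hab.eq_or_lt with rfl | hlt
  · simp
  have hba : 0 < b - a := sub_pos.mpr hlt
  have jensen := (even_two.convexOn_pow (𝕜 := ℝ)).map_set_average_le
    (continuous_pow 2).continuousOn isClosed_univ (μ := volume) (t := Set.Ioc a b)
    (by simpa using hlt) (by simp) (by simp) hg.integrableOn_Ioc (hg.pow 2).integrableOn_Ioc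
  simp only [setAverage_eq, measureReal_def, Real.volume_Ioc, ENNReal.toReal_ofReal hba.le,
    smul_eq_mul, ← intervalIntegral.integral_of_le hab] at jensen
  rw [mul_pow, inv_pow] at jensen
  have := mul_le_mul_of_nonneg_left jensen (sq_nonneg (b - a))
  field_simp at this
  linarith

theorem lintegral_sq_gaussianReal (v : ℝ≥0) :
    ∫⁻ x, ENNReal.ofReal (x ^ 2) ∂gaussianReal 0 v = v := by
  have := (memLp_id_gaussianReal (μ := 0) (v := v) 2).ofReal_variance_eq
  simpa [evariance_eq_lintegral_ofReal, integral_id_gaussianReal] using this.symm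

theorem lipschitzWith_of_abs_deriv_le {g : ℝ → ℝ} {C : ℝ} (hg : Differentiable ℝ g)
    (hC : ∀ x, |deriv g x| ≤ C) : LipschitzWith C.toNNReal g :=
  lipschitzWith_of_nnnorm_deriv_le hg fun x => by
    rw [← NNReal.coe_le_coe, coe_nnnorm, Real.norm_eq_abs, Real.coe_toNNReal']
    exact le_max_of_le_left (hC x)

theorem IsScaleFun.lipschitzWith {σ h : ℝ → ℝ} {x₀ : ℝ} (hD : IsScaleFun σ x₀ h) {C : ℝ}
    (hσ : ∀ x, |σ x| ≤ C) : LipschitzWith C.toNNReal h :=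
  lipschitzWith_of_abs_deriv_le (fun x => (hD.2 x).differentiableAt) fun x => by
    rw [(hD.2 x).deriv]
    exact hσ _

section DyadicGrid

variable {n j m : ℕ}

theorem card_Ico_mul_add_one_mul (k m : ℕ) : (Finset.Ico (k * m) ((k + 1) * m)).card = m := by
  rw [Nat.card_Ico, add_mul, one_mul, Nat.add_sub_cancel_left]

theorem ind_natCast_div (hn : n = 2 ^ j * m) (hm : 0 < m) (k i : ℕ) :
    ind j k ((i : ℝ) / n) = if i ∈ Finset.Ioc (k * m) ((k + 1) * m) then 1 else 0 := by
  have hn0 : (0 : ℝ) < n := by rw [hn]; positivity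
  have hgrid : ∀ l : ℕ, (l : ℝ) / 2 ^ j = ((l * m : ℕ) : ℝ) / n := fun l => by
    rw [hn]; push_cast; field_simp
  have hmem : (i : ℝ) / n ∈ Set.Ioc ((k : ℝ) / 2 ^ j) (((k : ℝ) + 1) / 2 ^ j) ↔
      i ∈ Finset.Ioc (k * m) ((k + 1) * m) := by
    rw [← Nat.cast_succ, hgrid, hgrid, Set.mem_Ioc, Finset.mem_Ioc,
      div_lt_div_iff_of_pos_right hn0, div_le_div_iff_of_pos_right hn0, Nat.cast_lt, Nat.cast_le]
  simp only [ind, Set.indicator_apply, hmem, Pi.one_apply]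

theorem sum_Icc_ind_mul (hn : n = 2 ^ j * m) (hm : 0 < m) {k : ℕ} (hk : k < 2 ^ j)
    (g : ℕ → ℝ) :
    ∑ i ∈ Finset.Icc 1 n, ind j k ((i : ℝ) / n) * g i =
      ∑ p ∈ Finset.Ico (k * m) ((k + 1) * m), g (p + 1) := by
  have hblock : Finset.Ioc (k * m) ((k + 1) * m) ⊆ Finset.Icc 1 n := by
    intro i hi
    simp only [Finset.mem_Ioc, Finset.mem_Icc] at hi ⊢
    exact ⟨by omega, hi.2.trans (hn ▸ Nat.mul_le_mul_right m hk)⟩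
  simp only [ind_natCast_div hn hm, ite_mul, one_mul, zero_mul]
  rw [Finset.sum_ite_mem, Finset.inter_eq_right.mpr hblock, ← Finset.Ico_add_one_add_one_eq_Ioc,
    Finset.sum_Ico_add']

theorem intervalIntegral_ind_mul {k : ℕ} (hk : k < 2 ^ j) (φ : ℝ → ℝ) :
    ∫ s in (0 : ℝ)..1, ind j k s * φ s = ∫ s in (k : ℝ) / 2 ^ j..((k : ℝ) + 1) / 2 ^ j, φ s := by
  have hsub : Set.Ioc ((k : ℝ) / 2 ^ j) (((k : ℝ) + 1) / 2 ^ j) ⊆ Set.Ioc 0 1 := by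
    apply Set.Ioc_subset_Ioc (by positivity)
    rw [div_le_one (by positivity)]
    exact_mod_cast hk
  have hind : (fun s => ind j k s * φ s) =
      Set.indicator (Set.Ioc ((k : ℝ) / 2 ^ j) (((k : ℝ) + 1) / 2 ^ j)) φ := by
    ext s
    simp only [ind, Set.indicator_apply, Pi.one_apply]
    split_ifs <;> simp
  rw [hind, intervalIntegral.integral_of_le zero_le_one, intervalIntegral.integral_of_le
    (by gcongr; linarith), integral_indicator measurableSet_Ioc, Measure.restrict_restrict
    measurableSet_Ioc, Set.inter_eq_left.mpr hsub]

theorem riemannSum_sub_integral_eq (hn : n = 2 ^ j * m) (hm : 0 < m) {k : ℕ} (hk : k < 2 ^ j)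
    {φ : ℝ → ℝ} (hφ : Continuous φ) :
    (∑ i ∈ Finset.Icc 1 n, ind j k ((i : ℝ) / n) * φ ((i : ℝ) / n)) / n -
        ∫ s in (0 : ℝ)..1, ind j k s * φ s =
      ∑ p ∈ Finset.Ico (k * m) ((k + 1) * m),
        ∫ s in (p : ℝ) / n..((p : ℝ) + 1) / n, (φ (((p : ℝ) + 1) / n) - φ s) := by
  have hgrid : ∀ l : ℕ, (l : ℝ) / 2 ^ j = ((l * m : ℕ) : ℝ) / n := fun l => by
    rw [hn]; push_cast; field_simp
  have hadj := intervalIntegral.sum_integral_adjacent_intervals_Ico (a := fun p : ℕ => (p : ℝ) / n)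
    (Nat.mul_le_mul_right m k.le_succ) (fun _ _ => hφ.intervalIntegrable _ _) (μ := volume)
  rw [sum_Icc_ind_mul hn hm hk fun i => φ ((i : ℝ) / n), intervalIntegral_ind_mul hk,
    ← Nat.cast_add_one, hgrid, hgrid, ← hadj, Finset.sum_div, ← Finset.sum_sub_distrib]
  refine Finset.sum_congr rfl fun p _ => ?_
  rw [intervalIntegral.integral_sub intervalIntegrable_const (hφ.intervalIntegrable _ _),
    intervalIntegral.integral_const, smul_eq_mul]
  push_cast
  ring

theorem sq_riemannSum_sub_integral_le (hn : n = 2 ^ j * m) (hm : 0 < m) {k : ℕ} (hk : k < 2 ^ j)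
    {φ : ℝ → ℝ} (hφ : Continuous φ) :
    ((2 : ℝ) ^ ((j : ℝ) / 2) / n *
        (∑ i ∈ Finset.Icc 1 n, ind j k ((i : ℝ) / n) * φ ((i : ℝ) / n)) -
        (2 : ℝ) ^ ((j : ℝ) / 2) * ∫ s in (0 : ℝ)..1, ind j k s * φ s) ^ 2 ≤
      ∑ p ∈ Finset.Ico (k * m) ((k + 1) * m),
        ∫ s in (p : ℝ) / n..((p : ℝ) + 1) / n, (φ (((p : ℝ) + 1) / n) - φ s) ^ 2 := by
  have hcast : (n : ℝ) = 2 ^ j * m := by rw [hn]; push_cast; ring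
  have hsq : ((2 : ℝ) ^ ((j : ℝ) / 2)) ^ 2 = 2 ^ j := by
    rw [← Real.rpow_natCast, ← Real.rpow_mul zero_le_two]
    norm_num
  have hstep : ∀ p : ℕ, (p : ℝ) / n ≤ ((p : ℝ) + 1) / n := fun p => by gcongr; linarith
  have hwidth : ∀ p : ℕ, ((p : ℝ) + 1) / n - p / n = 1 / n := fun p => by ring
  calc _ = (2 : ℝ) ^ j * (∑ p ∈ Finset.Ico (k * m) ((k + 1) * m),
          ∫ s in (p : ℝ) / n..((p : ℝ) + 1) / n, (φ (((p : ℝ) + 1) / n) - φ s)) ^ 2 := by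
        rw [← riemannSum_sub_integral_eq hn hm hk hφ, ← hsq]
        ring
    _ ≤ (2 : ℝ) ^ j * (m * ∑ p ∈ Finset.Ico (k * m) ((k + 1) * m),
          (∫ s in (p : ℝ) / n..((p : ℝ) + 1) / n, (φ (((p : ℝ) + 1) / n) - φ s)) ^ 2) := by
        gcongr
        simpa only [card_Ico_mul_add_one_mul] using
          sq_sum_le_card_mul_sum_sq (α := ℝ) (s := Finset.Ico (k * m) ((k + 1) * m))
    _ ≤ (2 : ℝ) ^ j * (m * ∑ p ∈ Finset.Ico (k * m) ((k + 1) * m),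
          1 / n * ∫ s in (p : ℝ) / n..((p : ℝ) + 1) / n, (φ (((p : ℝ) + 1) / n) - φ s) ^ 2) := by
        gcongr with p
        rw [← hwidth p]
        exact sq_intervalIntegral_le_mul (hstep p) (continuous_const.sub hφ)
    _ = _ := by
        rw [← Finset.mul_sum, hcast]
        field_simp

theorem ofReal_sq_riemannSum_sub_integral_le (hn : n = 2 ^ j * m) (hm : 0 < m) {k : ℕ}
    (hk : k < 2 ^ j) {φ : ℝ → ℝ} (hφ : Continuous φ) :
    ENNReal.ofReal (((2 : ℝ) ^ ((j : ℝ) / 2) / n *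
        (∑ i ∈ Finset.Icc 1 n, ind j k ((i : ℝ) / n) * φ ((i : ℝ) / n)) -
        (2 : ℝ) ^ ((j : ℝ) / 2) * ∫ s in (0 : ℝ)..1, ind j k s * φ s) ^ 2) ≤
      ∑ p ∈ Finset.Ico (k * m) ((k + 1) * m),
        ∫⁻ s in Set.Ioc ((p : ℝ) / n) (((p : ℝ) + 1) / n),
          ENNReal.ofReal ((φ (((p : ℝ) + 1) / n) - φ s) ^ 2) := by
  have hstep : ∀ p : ℕ, (p : ℝ) / n ≤ ((p : ℝ) + 1) / n := fun p => by gcongr; linarith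
  refine (ENNReal.ofReal_le_ofReal (sq_riemannSum_sub_integral_le hn hm hk hφ)).trans_eq ?_
  rw [ENNReal.ofReal_sum_of_nonneg fun p _ =>
    intervalIntegral.integral_nonneg (hstep p) fun _ _ => sq_nonneg _]
  refine Finset.sum_congr rfl fun p _ => ?_
  rw [intervalIntegral.integral_of_le (hstep p)]
  exact ofReal_integral_eq_lintegral_ofReal (Continuous.integrableOn_Ioc (by fun_prop))
    (ae_of_all _ fun _ => sq_nonneg _)

end DyadicGrid

namespace IsStdBM

variable {W : ℝ → Ω → ℝ} (hW : IsStdBM W)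
include hW

theorem lintegral_sq_sub {s t : ℝ} (hs : 0 ≤ s) (hst : s ≤ t) :
    ∫⁻ ω, ENNReal.ofReal ((W t ω - W s ω) ^ 2) = ENNReal.ofReal (t - s) := by
  have hinc : Measurable fun ω => W t ω - W s ω := (hW.1 t).sub (hW.1 s)
  rw [← lintegral_map (f := fun x => ENNReal.ofReal (x ^ 2)) (by fun_prop) hinc,
    hW.2.2.2.1 s t hs hst, lintegral_sq_gaussianReal]
  rfl

theorem lintegral_sq_comp_sub_le {g : ℝ → ℝ} {L : ℝ≥0} (hg : LipschitzWith L g) {s t : ℝ}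
    (hs : 0 ≤ s) (hst : s ≤ t) :
    ∫⁻ ω, ENNReal.ofReal ((g (W t ω) - g (W s ω)) ^ 2) ≤ ENNReal.ofReal (L ^ 2 * (t - s)) := by
  calc _ ≤ ∫⁻ ω, ENNReal.ofReal (L ^ 2) * ENNReal.ofReal ((W t ω - W s ω) ^ 2) := by
        refine lintegral_mono fun ω => ?_
        rw [← ENNReal.ofReal_mul (sq_nonneg _), ← mul_pow]
        refine ENNReal.ofReal_le_ofReal (sq_le_sq.mpr ?_)
        rw [abs_mul, NNReal.abs_eq]
        simpa [Real.dist_eq] using hg.dist_le_mul (W t ω) (W s ω)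
    _ = ENNReal.ofReal (L ^ 2 * (t - s)) := by
        have hinc : Measurable fun ω => W t ω - W s ω := (hW.1 t).sub (hW.1 s)
        rw [lintegral_const_mul _ (hinc.pow_const 2).ennreal_ofReal,
          hW.lintegral_sq_sub hs hst, ENNReal.ofReal_mul (sq_nonneg _)]

theorem measurable_sq_comp_sub {g : ℝ → ℝ} (hg : Continuous g) (b : ℝ) :
    Measurable fun p : Ω × ℝ => ENNReal.ofReal ((g (W b p.1) - g (W p.2 p.1)) ^ 2) := by
  have hjoint : Measurable (Function.uncurry W) :=
    measurable_uncurry_of_continuous_of_measurable hW.2.2.1 hW.1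
  have hpath : Measurable fun p : Ω × ℝ => W p.2 p.1 := hjoint.comp measurable_swap
  exact (((hg.measurable.comp ((hW.1 b).comp measurable_fst)).sub
    (hg.measurable.comp hpath)).pow_const 2).ennreal_ofReal

theorem lintegral_setLIntegral_sq_comp_sub_le [SFinite (ℙ : Measure Ω)] {g : ℝ → ℝ} {L : ℝ≥0}
    (hg : LipschitzWith L g) {a b : ℝ} (ha : 0 ≤ a) (hab : a ≤ b) :
    ∫⁻ ω, ∫⁻ s in Set.Ioc a b, ENNReal.ofReal ((g (W b ω) - g (W s ω)) ^ 2) ≤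
      ENNReal.ofReal (L ^ 2 * (b - a) ^ 2) := by
  rw [lintegral_lintegral_swap (hW.measurable_sq_comp_sub hg.continuous b).aemeasurable]
  calc _ ≤ ∫⁻ _ in Set.Ioc a b, ENNReal.ofReal (L ^ 2 * (b - a)) :=
        setLIntegral_mono measurable_const fun s hs =>
          (hW.lintegral_sq_comp_sub_le hg (ha.trans hs.1.le) hs.2).trans
            (ENNReal.ofReal_le_ofReal (by gcongr; linarith [hs.1]))
    _ = ENNReal.ofReal (L ^ 2 * (b - a) ^ 2) := by
        rw [setLIntegral_const, Real.volume_Ioc, ← ENNReal.ofReal_mul (by positivity)]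
        ring_nf

end IsStdBM

section Theorems

variable {Ω : Type*} [MeasureSpace Ω] [IsProbabilityMeasure (ℙ : Measure Ω)]

/-- Lemma 2 (Riemann approximation). -/
theorem statement7 (W : ℝ → Ω → ℝ) (σ h : ℝ → ℝ) (x₀ : ℝ) (f : ℝ → ℝ)
    (hW : IsStdBM W) (hB : AssumptionBp σ) (hD : IsScaleFun σ x₀ h)
    (hf : ContDiff ℝ 1 f) (hfb : ∃ C, ∀ x, |f x| ≤ C ∧ |deriv f x| ≤ C) :
    ∃ c : ℝ, ∀ n j k : ℕ, 1 ≤ n → 2 ^ j ∣ n → k < 2 ^ j →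
      ∫⁻ ω, ENNReal.ofReal
          (((2:ℝ) ^ ((j : ℝ) / 2) / n *
              (∑ i ∈ Finset.Icc 1 n, ind j k ((i : ℝ) / n) * f (h (W ((i : ℝ) / n) ω))) -
            (2:ℝ) ^ ((j : ℝ) / 2) * ∫ s in (0:ℝ)..1, ind j k s * f (h (W s ω))) ^ 2) ∂ℙ ≤
        ENNReal.ofReal (c * (2:ℝ) ^ (-(j : ℝ)) / n) := by
  obtain ⟨-, ⟨Cσ, hCσ⟩, -⟩ := hB
  obtain ⟨Cf, hCf⟩ := hfb
  set L : ℝ≥0 := Cf.toNNReal * Cσ.toNNReal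
  have hlip : LipschitzWith L (f ∘ h) :=
    (lipschitzWith_of_abs_deriv_le (hf.differentiable one_ne_zero) fun x => (hCf x).2).comp
      (hD.lipschitzWith fun x => (hCσ x).1)
  refine ⟨(L : ℝ) ^ 2, fun n j k hn ⟨m, hnm⟩ hk => ?_⟩
  have hm : 0 < m := Nat.pos_of_ne_zero fun hm0 => by simp [hm0] at hnm; omega
  have hcast : (n : ℝ) = 2 ^ j * m := by rw [hnm]; push_cast; ring
  calc _ ≤ ∫⁻ ω, ∑ p ∈ Finset.Ico (k * m) ((k + 1) * m),
          ∫⁻ s in Set.Ioc ((p : ℝ) / n) (((p : ℝ) + 1) / n),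
            ENNReal.ofReal (((f ∘ h) (W (((p : ℝ) + 1) / n) ω) - (f ∘ h) (W s ω)) ^ 2) :=
        lintegral_mono fun ω =>
          ofReal_sq_riemannSum_sub_integral_le hnm hm hk (hlip.continuous.comp (hW.2.2.1 ω))
    _ = ∑ p ∈ Finset.Ico (k * m) ((k + 1) * m), ∫⁻ ω,
          ∫⁻ s in Set.Ioc ((p : ℝ) / n) (((p : ℝ) + 1) / n),
            ENNReal.ofReal (((f ∘ h) (W (((p : ℝ) + 1) / n) ω) - (f ∘ h) (W s ω)) ^ 2) :=
        lintegral_finsetSum _ fun _ _ =>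
          (hW.measurable_sq_comp_sub hlip.continuous _).lintegral_prod_right'
    _ ≤ ∑ p ∈ Finset.Ico (k * m) ((k + 1) * m), ENNReal.ofReal ((L : ℝ) ^ 2 * (1 / n) ^ 2) :=
        Finset.sum_le_sum fun p _ =>
          (hW.lintegral_setLIntegral_sq_comp_sub_le hlip (by positivity)
            (by gcongr; linarith)).trans_eq (by ring_nf)
    _ = ENNReal.ofReal ((L : ℝ) ^ 2 * (2 : ℝ) ^ (-(j : ℝ)) / n) := by
        rw [Finset.sum_const, card_Ico_mul_add_one_mul, nsmul_eq_mul, ← ENNReal.ofReal_natCast,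
          ← ENNReal.ofReal_mul (Nat.cast_nonneg _)]
        congr 1
        rw [Real.rpow_neg zero_le_two, Real.rpow_natCast, hcast]
        field_simp

end Theorems

end RoundOff
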